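/- arXiv:2204.02489 — 5 statements merged into one kernel-verified Lean document; each statement's English description precedes it below -/
import Mathlib

section
/- Let S = {(U_i, V_i)}_{i=1}^N be i.i.d. bivariate random variables on [0,1]² with uniform marginals, joint CDF F, and joint density f bounded above by f_max < ∞. Then E[|Pareto(S)|] ≤ N f_max ∫_0^1 ∫_0^1 (u + v − F(u, v))^{N−1} du dv. -/
open MeasureTheory ProbabilityTheory Set intervalIntegral

/-- A point indexed by `i` is maximal (Pareto-optimal) within the indexed family `p`. -/
def IsParetoPoint {N : ℕ} (p : Fin N → ℝ × ℝ) (i : Fin N) : Prop :=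
  ∀ j : Fin N, (p j).2 > (p i).2 → (p i).1 > (p j).1

/-- The number of Pareto-optimal points of the indexed family `p`. -/
noncomputable def paretoCard {N : ℕ} (p : Fin N → ℝ × ℝ) : ℕ :=
  Set.ncard {i : Fin N | IsParetoPoint p i}

/-!
Sample `i` is Pareto-optimal iff no other sample dominates it, so by independence, conditioning on
`W i = x`, it is Pareto-optimal with probability `g x ^ (N - 1)`, where `g x` is the mass of the
common law `ν` on points not dominating `x`. With uniform marginals the line `w.1 = u` is
`ν`-null, and inclusion–exclusion for the half-planes `w.2 ≤ v` and `w.1 ≤ u` gives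
`g (u, v) = u + v - F u v` on the unit square, which carries `ν`; there the density bound
dominates `ν` by `f_max` times Lebesgue measure.
-/

theorem integral_ncard_setOf_mem_eq_sum {Ω ι : Type*} [MeasurableSpace Ω] [Fintype ι]
    (μ : Measure Ω) [IsFiniteMeasure μ] {A : ι → Set Ω} (hA : ∀ i, MeasurableSet (A i)) :
    ∫ ω, ({i | ω ∈ A i}.ncard : ℝ) ∂μ = ∑ i, μ.real (A i) := by
  classical
  have hcount : ∀ ω, ({i | ω ∈ A i}.ncard : ℝ) = ∑ i, (A i).indicator 1 ω := by
    intro ω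
    rw [ncard_eq_toFinset_card', toFinset_ofPred, Finset.card_filter]
    push_cast
    exact Finset.sum_congr rfl fun i _ => by by_cases h : ω ∈ A i <;> simp [h]
  simp_rw [hcount]
  rw [integral_finsetSum _ fun i _ => (integrable_const 1).indicator (hA i)]
  exact Finset.sum_congr rfl fun i _ => integral_indicator_one (hA i)

namespace ProbabilityTheory

variable {Ω β ι : Type*} [MeasurableSpace Ω] [MeasurableSpace β] {μ : Measure Ω}
  {W : ι → Ω → β} {ν : Measure β}

theorem iIndepFun.measure_biInter_preimage_eq_pow (hindep : iIndepFun W μ)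
    (hW : ∀ i, Measurable (W i)) (hν : ∀ i, μ.map (W i) = ν) (S : Finset ι) {s : Set β}
    (hs : MeasurableSet s) :
    μ (⋂ j ∈ S, W j ⁻¹' s) = ν s ^ S.card := by
  rw [hindep.measure_inter_preimage_eq_mul S (sets := fun _ => s) fun _ _ => hs,
    Finset.prod_congr rfl fun j _ => (hν j ▸ Measure.map_apply (hW j) hs).symm,
    Finset.prod_const]

theorem iIndepFun.measure_forall_ne_mem_eq_lintegral_pow [Fintype ι] [DecidableEq ι]
    (hindep : iIndepFun W μ) (hW : ∀ i, Measurable (W i)) (hν : ∀ i, μ.map (W i) = ν)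
    {R : Set (β × β)} (hR : MeasurableSet R) (i : ι) :
    μ {ω | ∀ j ≠ i, (W i ω, W j ω) ∈ R}
      = ∫⁻ x, ν (Prod.mk x ⁻¹' R) ^ (Fintype.card ι - 1) ∂ν := by
  have := hindep.isProbabilityMeasure
  set S : Finset ι := {i}ᶜ
  let Y : Ω → S → β := fun ω j => W j ω
  have hY : Measurable Y := measurable_pi_lambda _ fun j => hW j
  have hYi : IndepFun Y (W i) μ :=
    (hindep.indepFun_finset S {i} (by simp [S]) hW).comp measurable_id
      (measurable_pi_apply (⟨i, Finset.mem_singleton_self i⟩ : ({i} : Finset ι)))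
  set T : Set ((S → β) × β) := {q | ∀ j, (q.2, q.1 j) ∈ R}
  have hT : MeasurableSet T := by
    simp only [T, ofPred_forall]
    exact MeasurableSet.iInter fun j =>
      hR.preimage (measurable_snd.prodMk ((measurable_pi_apply j).comp measurable_fst))
  have hpre : (fun ω => (Y ω, W i ω)) ⁻¹' T = {ω | ∀ j ≠ i, (W i ω, W j ω) ∈ R} := by
    ext ω
    simp [T, Y, S]
  have hslice : ∀ x, μ.map Y {q | (q, x) ∈ T} = ν (Prod.mk x ⁻¹' R) ^ (Fintype.card ι - 1) := by
    intro x
    have hY_pre : Y ⁻¹' {q | (q, x) ∈ T} = ⋂ j ∈ S, W j ⁻¹' (Prod.mk x ⁻¹' R) := by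
      ext ω
      simp [T, Y]
    rw [Measure.map_apply hY (s := {q | (q, x) ∈ T}) (hT.preimage measurable_prodMk_right),
      hY_pre, hindep.measure_biInter_preimage_eq_pow hW hν S (hR.preimage measurable_prodMk_left)]
    simp [S, Finset.card_compl]
  rw [← hpre, ← Measure.map_apply (hY.prodMk (hW i)) hT,
    (indepFun_iff_map_prod_eq_prod_map_map hY.aemeasurable (hW i).aemeasurable).mp hYi,
    Measure.prod_apply_symm hT, hν i]
  exact lintegral_congr hslice

end ProbabilityTheory

section UniformMarginals

variable {ν : Measure (ℝ × ℝ)}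

theorem ae_mem_unitSquare_of_map_fst_of_map_snd
    (hU : ν.map Prod.fst = volume.restrict (Icc 0 1))
    (hV : ν.map Prod.snd = volume.restrict (Icc 0 1)) :
    ∀ᵐ w ∂ν, w ∈ Icc (0 : ℝ) 1 ×ˢ Icc (0 : ℝ) 1 := by
  have hnull : ∀ {g : ℝ × ℝ → ℝ}, Measurable g → ν.map g = volume.restrict (Icc 0 1) →
      ∀ᵐ w ∂ν, g w ∈ Icc (0 : ℝ) 1 := fun hg hmap =>
    ae_of_ae_map hg.aemeasurable (hmap ▸ ae_restrict_mem measurableSet_Icc)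
  filter_upwards [hnull measurable_fst hU, hnull measurable_snd hV] with w hu hv
  exact ⟨hu, hv⟩

theorem measureReal_fst_le_eq (hU : ν.map Prod.fst = volume.restrict (Icc 0 1))
    {u : ℝ} (hu : u ∈ Icc (0 : ℝ) 1) : ν.real {w | w.1 ≤ u} = u := by
  have hslab : Iic u ∩ Icc 0 1 = Icc 0 u := by
    ext t
    simp only [mem_inter_iff, mem_Iic, mem_Icc]
    grind [hu.2]
  change (ν (Prod.fst ⁻¹' Iic u)).toReal = u
  rw [← Measure.map_apply measurable_fst measurableSet_Iic, hU,
    Measure.restrict_apply measurableSet_Iic, hslab, Real.volume_Icc, sub_zero,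
    ENNReal.toReal_ofReal hu.1]

theorem measure_fst_eq_eq_zero (hU : ν.map Prod.fst = volume.restrict (Icc 0 1)) (u : ℝ) :
    ν {w | w.1 = u} = 0 := by
  change ν (Prod.fst ⁻¹' {u}) = 0
  rw [← Measure.map_apply measurable_fst (measurableSet_singleton u), hU]
  exact Measure.restrict_le_self.absolutelyContinuous Real.volume_singleton

theorem measureReal_nonDominating_eq [IsFiniteMeasure ν]
    (hU : ν.map Prod.fst = volume.restrict (Icc 0 1))
    (hV : ν.map Prod.snd = volume.restrict (Icc 0 1))
    {u v : ℝ} (hu : u ∈ Icc (0 : ℝ) 1) (hv : v ∈ Icc (0 : ℝ) 1) :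
    ν.real {w | w.2 > v → u > w.1} = u + v - ν.real {w | w.1 ≤ u ∧ w.2 ≤ v} := by
  have hae : {w : ℝ × ℝ | w.2 > v → u > w.1} =ᵐ[ν]
      ({w | w.1 ≤ u} ∪ {w | w.2 ≤ v} : Set (ℝ × ℝ)) := by
    refine ae_eq_set.2 ⟨measure_mono_null (fun w hw => ?_) (measure_fst_eq_eq_zero hU u),
      measure_mono_null (fun w hw => ?_) (measure_fst_eq_eq_zero hU u)⟩ <;>
    simp only [mem_sdiff, mem_union, mem_ofPred_eq] at hw ⊢ <;> grind
  have hV' : (ν.map Prod.swap).map Prod.fst = volume.restrict (Icc 0 1) := by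
    rw [Measure.map_map measurable_fst measurable_swap]; exact hV
  have hv' : ν.real {w | w.2 ≤ v} = v := by
    simpa [measureReal_def, Measure.map_apply measurable_swap (measurableSet_le measurable_fst
      measurable_const)] using measureReal_fst_le_eq hV' hv
  have hunion := measureReal_union_add_inter (μ := ν) (s := {w : ℝ × ℝ | w.1 ≤ u})
    (t := {w : ℝ × ℝ | w.2 ≤ v}) (measurableSet_le measurable_snd measurable_const)
  rw [measureReal_fst_le_eq hU hu, hv'] at hunion
  rw [measureReal_congr hae]
  exact eq_sub_of_add_eq hunion

end UniformMarginals

section Domination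

variable {α : Type*} [MeasurableSpace α] {ν ρ : Measure α} {c : ℝ}

theorem withDensity_ofReal_le_smul {f : α → ℝ} (hf : ∀ x, f x ≤ c) :
    ρ.withDensity (fun x => ENNReal.ofReal (f x)) ≤ ENNReal.ofReal c • ρ := by
  rw [← withDensity_const]
  exact withDensity_mono (ae_of_all _ fun x => ENNReal.ofReal_le_ofReal (hf x))

theorem nonneg_of_le_ofReal_smul [NeZero ν] (h : ν ≤ ENNReal.ofReal c • ρ) : 0 ≤ c := by
  by_contra! hc
  rw [ENNReal.ofReal_of_nonpos hc.le, zero_smul] at h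
  exact NeZero.ne ν (le_antisymm h (Measure.zero_le ν))

theorem integral_le_mul_setIntegral_of_le_smul {s : Set α} {φ : α → ℝ} (hc : 0 ≤ c)
    (hν : ν ≤ ENNReal.ofReal c • ρ) (hs : ∀ᵐ x ∂ν, x ∈ s) (hφ : 0 ≤ φ)
    (hφs : IntegrableOn φ s ρ) :
    ∫ x, φ x ∂ν ≤ c * ∫ x in s, φ x ∂ρ := by
  calc ∫ x, φ x ∂ν = ∫ x in s, φ x ∂ν := by rw [Measure.restrict_eq_self_of_ae_mem hs]
    _ ≤ ∫ x in s, φ x ∂(ENNReal.ofReal c • ρ) :=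
      integral_mono_measure (Measure.restrict_mono subset_rfl hν) (ae_of_all _ hφ)
        (by rw [Measure.restrict_smul]; exact hφs.smul_measure ENNReal.ofReal_ne_top)
    _ = c * ∫ x in s, φ x ∂ρ := by
      rw [Measure.restrict_smul, MeasureTheory.integral_smul_measure, ENNReal.toReal_ofReal hc,
        smul_eq_mul]

end Domination

theorem setIntegral_Icc_prod_Icc {E : Type*} [NormedAddCommGroup E] [NormedSpace ℝ E]
    {a b c d : ℝ} (hab : a ≤ b) (hcd : c ≤ d) {h : ℝ → ℝ → E}
    (hh : IntegrableOn (fun x : ℝ × ℝ => h x.1 x.2) (Icc a b ×ˢ Icc c d)) :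
    ∫ x in Icc a b ×ˢ Icc c d, h x.1 x.2 = ∫ u in a..b, ∫ v in c..d, h u v := by
  rw [Measure.volume_eq_prod] at hh ⊢
  simp only [setIntegral_prod _ hh, intervalIntegral.integral_of_le hab,
    intervalIntegral.integral_of_le hcd, integral_Icc_eq_integral_Ioc]

/-- `(x, w)` lies in this set when `w` does not rule out `x` as a Pareto point. -/
def nonDominatingPairs : Set ((ℝ × ℝ) × (ℝ × ℝ)) := {q | q.2.2 > q.1.2 → q.1.1 > q.2.1}

theorem measurableSet_nonDominatingPairs : MeasurableSet nonDominatingPairs :=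
  (measurableSet_lt (measurable_snd.comp measurable_fst) (measurable_snd.comp measurable_snd)).imp
    (measurableSet_lt (measurable_fst.comp measurable_snd) (measurable_fst.comp measurable_fst))

theorem isParetoPoint_iff_forall_ne {N : ℕ} {p : Fin N → ℝ × ℝ} {i : Fin N} :
    IsParetoPoint p i ↔ ∀ j ≠ i, (p i, p j) ∈ nonDominatingPairs :=
  ⟨fun h j _ => h j, fun h j => if hji : j = i then (absurd · (hji ▸ lt_irrefl _)) else h j hji⟩

section ParetoCount

variable {Ω : Type*} [MeasurableSpace Ω] {μ : Measure Ω} {N : ℕ} {W : Fin N → Ω → ℝ × ℝ}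
  {ν : Measure (ℝ × ℝ)}

theorem integral_paretoCard_eq [IsFiniteMeasure ν] (hW : ∀ i, Measurable (W i))
    (hindep : iIndepFun W μ) (hν : ∀ i, μ.map (W i) = ν) :
    ∫ ω, (paretoCard (W · ω) : ℝ) ∂μ
      = N * ∫ x, ν.real (Prod.mk x ⁻¹' nonDominatingPairs) ^ (N - 1) ∂ν := by
  have := hindep.isProbabilityMeasure
  have hpareto : ∀ i, {ω | IsParetoPoint (W · ω) i}
      = {ω | ∀ j ≠ i, (W i ω, W j ω) ∈ nonDominatingPairs} :=
    fun i => ext fun _ => isParetoPoint_iff_forall_ne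
  have hmeas : ∀ i, MeasurableSet {ω | IsParetoPoint (W · ω) i} := fun i => by
    change MeasurableSet {ω | ∀ j, (W i ω, W j ω) ∈ nonDominatingPairs}
    rw [ofPred_forall]
    exact .iInter fun j => measurableSet_nonDominatingPairs.preimage ((hW i).prodMk (hW j))
  have hprob : ∀ i, μ.real {ω | IsParetoPoint (W · ω) i}
      = ∫ x, ν.real (Prod.mk x ⁻¹' nonDominatingPairs) ^ (N - 1) ∂ν := fun i => by
    rw [hpareto, measureReal_def,
      hindep.measure_forall_ne_mem_eq_lintegral_pow hW hν measurableSet_nonDominatingPairs,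
      ← integral_toReal
        ((measurable_measure_prodMk_left measurableSet_nonDominatingPairs).pow_const _).aemeasurable
        (ae_of_all _ fun _ => ENNReal.pow_lt_top (measure_lt_top _ _))]
    simp [measureReal_def]
  calc ∫ ω, (paretoCard (W · ω) : ℝ) ∂μ = ∑ i, μ.real {ω | IsParetoPoint (W · ω) i} :=
        integral_ncard_setOf_mem_eq_sum μ hmeas
    _ = _ := by simp [hprob]

end ParetoCount

theorem integral_pow_measureReal_nonDominating_le {ν : Measure (ℝ × ℝ)}
    [IsProbabilityMeasure ν] (hU : ν.map Prod.fst = volume.restrict (Icc 0 1))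
    (hV : ν.map Prod.snd = volume.restrict (Icc 0 1)) {c : ℝ}
    (hdom : ν ≤ ENNReal.ofReal c • volume) (n : ℕ) :
    ∫ x, ν.real (Prod.mk x ⁻¹' nonDominatingPairs) ^ n ∂ν
      ≤ c * ∫ u in (0 : ℝ)..1, ∫ v in (0 : ℝ)..1, (u + v - ν.real {w | w.1 ≤ u ∧ w.2 ≤ v}) ^ n := by
  set φ : ℝ × ℝ → ℝ := fun x => ν.real (Prod.mk x ⁻¹' nonDominatingPairs) ^ n
  have hQ : MeasurableSet (Icc (0 : ℝ) 1 ×ˢ Icc (0 : ℝ) 1) :=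
    measurableSet_Icc.prod measurableSet_Icc
  have hφ : EqOn φ (fun x => (x.1 + x.2 - ν.real {w | w.1 ≤ x.1 ∧ w.2 ≤ x.2}) ^ n)
      (Icc 0 1 ×ˢ Icc 0 1) := fun x ⟨hu, hv⟩ =>
    congrArg (· ^ n) (measureReal_nonDominating_eq hU hV hu hv)
  have hφint : IntegrableOn φ (Icc 0 1 ×ˢ Icc 0 1) :=
    Measure.integrableOn_of_bounded (M := 1) (isCompact_Icc.prod isCompact_Icc).measure_lt_top.ne
      ((measurable_measure_prodMk_left measurableSet_nonDominatingPairs).ennreal_toReal.pow_const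
        _).aestronglyMeasurable
      (ae_of_all _ fun x => by
        rw [Real.norm_of_nonneg (by positivity)]
        exact pow_le_one₀ measureReal_nonneg measureReal_le_one)
  calc ∫ x, φ x ∂ν ≤ c * ∫ x in Icc 0 1 ×ˢ Icc 0 1, φ x :=
        integral_le_mul_setIntegral_of_le_smul (nonneg_of_le_ofReal_smul hdom) hdom
          (ae_mem_unitSquare_of_map_fst_of_map_snd hU hV) (fun x => by positivity) hφint
    _ = _ := by
      rw [setIntegral_congr_fun hQ hφ, setIntegral_Icc_prod_Icc zero_le_one zero_le_one
        (h := fun u v => (u + v - ν.real {w | w.1 ≤ u ∧ w.2 ≤ v}) ^ n) (hφint.congr_fun hφ hQ)]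

theorem expected_pareto_card_upper_bound_general
    {Ω : Type*} [MeasurableSpace Ω] (μ : Measure Ω) [IsProbabilityMeasure μ]
    {N : ℕ} (hN : 0 < N)
    (W : Fin N → Ω → ℝ × ℝ) (hWmeas : ∀ i, Measurable (W i))
    (hindep : iIndepFun W μ)
    (hident : ∀ i j, IdentDistrib (W i) (W j) μ μ)
    -- uniform marginal distributions on [0,1]
    (hunifU : ∀ i, Measure.map (fun ω => (W i ω).1) μ = volume.restrict (Set.Icc (0:ℝ) 1))
    (hunifV : ∀ i, Measure.map (fun ω => (W i ω).2) μ = volume.restrict (Set.Icc (0:ℝ) 1))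
    -- F is the joint CDF of the common distribution
    (F : ℝ → ℝ → ℝ)
    (hF : ∀ u v, F u v = (μ {ω | (W ⟨0, hN⟩ ω).1 ≤ u ∧ (W ⟨0, hN⟩ ω).2 ≤ v}).toReal)
    -- f is the joint density of the common distribution
    (f : ℝ → ℝ → ℝ)
    (hf : Measure.map (W ⟨0, hN⟩) μ
      = volume.withDensity (fun p : ℝ × ℝ => ENNReal.ofReal (f p.1 p.2)))
    -- the density is bounded above by f_max
    (fmax : ℝ) (hfmax : ∀ u v, f u v ≤ fmax) :
    ∫ ω, (paretoCard (fun i => W i ω) : ℝ) ∂μ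
      ≤ (N : ℝ) * fmax * ∫ u in (0:ℝ)..1, ∫ v in (0:ℝ)..1,
          (u + v - F u v) ^ (N - 1) := by
  set ν := μ.map (W ⟨0, hN⟩) with hν
  have : IsProbabilityMeasure ν := Measure.isProbabilityMeasure_map (hWmeas _).aemeasurable
  have hU : ν.map Prod.fst = volume.restrict (Icc 0 1) := by
    rw [Measure.map_map measurable_fst (hWmeas _)]; exact hunifU _
  have hV : ν.map Prod.snd = volume.restrict (Icc 0 1) := by
    rw [Measure.map_map measurable_snd (hWmeas _)]; exact hunifV _
  have hdom : ν ≤ ENNReal.ofReal fmax • volume :=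
    hf ▸ withDensity_ofReal_le_smul fun x => hfmax x.1 x.2
  have hF' : ∀ u v, F u v = ν.real {w | w.1 ≤ u ∧ w.2 ≤ v} := fun u v => by
    rw [hF, measureReal_def, hν,
      Measure.map_apply (s := {w : ℝ × ℝ | w.1 ≤ u ∧ w.2 ≤ v}) (hWmeas _)
      ((measurableSet_le measurable_fst measurable_const).inter
        (measurableSet_le measurable_snd measurable_const))]
    rfl
  rw [integral_paretoCard_eq hWmeas hindep fun i => (hident i _).map_eq, mul_assoc]
  simp_rw [hF']
  gcongr
  exact integral_pow_measureReal_nonDominating_le hU hV hdom (N - 1)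

/-- For i.i.d. samples `(U_i, V_i)_{i=1}^N` on `[0,1]²` with uniform marginals, joint
CDF `F`, and joint density `f` bounded above by `f_max`, the expected size of the
Pareto set is at most `N f_max ∫₀¹∫₀¹ (u + v - F(u,v))^{N-1} du dv`. -/
theorem expected_pareto_card_upper_bound
    {Ω : Type*} [MeasurableSpace Ω] (μ : Measure Ω) [IsProbabilityMeasure μ]
    {N : ℕ} (hN : 0 < N)
    (W : Fin N → Ω → ℝ × ℝ) (hWmeas : ∀ i, Measurable (W i))
    (hindep : iIndepFun W μ)
    (hident : ∀ i j, IdentDistrib (W i) (W j) μ μ)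
    -- the samples take values in [0,1]²
    (hrange : ∀ i ω, W i ω ∈ Set.Icc (0:ℝ) 1 ×ˢ Set.Icc (0:ℝ) 1)
    -- uniform marginal distributions on [0,1]
    (hunifU : ∀ i, Measure.map (fun ω => (W i ω).1) μ = volume.restrict (Set.Icc (0:ℝ) 1))
    (hunifV : ∀ i, Measure.map (fun ω => (W i ω).2) μ = volume.restrict (Set.Icc (0:ℝ) 1))
    -- F is the joint CDF of the common distribution
    (F : ℝ → ℝ → ℝ)
    (hF : ∀ u v, F u v = (μ {ω | (W ⟨0, hN⟩ ω).1 ≤ u ∧ (W ⟨0, hN⟩ ω).2 ≤ v}).toReal)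
    -- f is the joint density of the common distribution
    (f : ℝ → ℝ → ℝ)
    (hf : Measure.map (W ⟨0, hN⟩) μ
      = volume.withDensity (fun p : ℝ × ℝ => ENNReal.ofReal (f p.1 p.2)))
    -- the density is bounded above by f_max
    (fmax : ℝ) (hfmax : ∀ u v, f u v ≤ fmax) :
    ∫ ω, (paretoCard (fun i => W i ω) : ℝ) ∂μ
      ≤ (N : ℝ) * fmax * ∫ u in (0:ℝ)..1, ∫ v in (0:ℝ)..1,
          (u + v - F u v) ^ (N - 1) :=
  expected_pareto_card_upper_bound_general μ hN W hWmeas hindep hident hunifU hunifV F hF f hf fmax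
    hfmax
end

section
/- For the independence copula C(u, v) = uv and R_N := {(u, v) ∈ [0,1]² : u + v − uv ≥ e^{−1/N}}, the measure λ(R_N) = e^{−1/N}(1 − e^{1/N})(log(1 − e^{−1/N}) − 1) admits the asymptotic expansion λ(R_N) = (log N)/N + O(1/N) as N → ∞. -/
open MeasureTheory Filter Asymptotics Set

/-- The region `R_N = {(u,v) ∈ [0,1]² : u + v - C(u,v) ≥ e^{-1/N}}`. -/
noncomputable def copulaRegion (C : ℝ → ℝ → ℝ) (N : ℕ) : Set (ℝ × ℝ) :=
  {p | p ∈ Set.Icc (0:ℝ) 1 ×ˢ Set.Icc (0:ℝ) 1 ∧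
    p.1 + p.2 - C p.1 p.2 ≥ Real.exp (-1 / (N : ℝ))}

lemma volume_graph_zero {g : ℝ → ℝ} (hg : Measurable g) :
    volume {p : ℝ × ℝ | p.2 = g p.1} = 0 := by
  rw [Measure.volume_eq_prod, Measure.prod_apply (measurableSet_graph hg)]
  have h : ∀ x : ℝ, (Prod.mk x ⁻¹' {p : ℝ × ℝ | p.2 = g p.1}) = {g x} := by
    intro x; ext v; simp [Set.mem_preimage]
  simp only [h, Real.volume_singleton, lintegral_const, zero_mul]

lemma volume_top_line_zero : volume ((Set.univ : Set ℝ) ×ˢ ({1} : Set ℝ)) = 0 := by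
  rw [Measure.volume_eq_prod, Measure.prod_prod]
  simp

lemma area_formula {a : ℝ} (ha0 : 0 < a) (ha1 : a < 1) :
    volume {p : ℝ × ℝ | p ∈ Set.Icc (0:ℝ) 1 ×ˢ Set.Icc (0:ℝ) 1 ∧ p.1 + p.2 - p.1 * p.2 ≥ a}
      = ENNReal.ofReal ((1 - a) * (1 - Real.log (1 - a))) := by
  set g : ℝ → ℝ := fun u => if u < a then (a - u) / (1 - u) else 0 with hg_def
  have hgm : Measurable g :=
    Measurable.ite (measurableSet_lt measurable_id measurable_const)
      ((measurable_const.sub measurable_id).div (measurable_const.sub measurable_id))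
      measurable_const
  have hg0 : ∀ u, 0 ≤ g u := by
    intro u; simp only [hg_def]
    split_ifs with h
    · exact div_nonneg (by linarith) (by linarith)
    · exact le_refl 0
  have hg1 : ∀ u, g u ≤ 1 := by
    intro u; simp only [hg_def]
    split_ifs with h
    · rw [div_le_one (by linarith)]; linarith
    · exact zero_le_one
  set S : Set (ℝ × ℝ) :=
    {p : ℝ × ℝ | p ∈ Set.Icc (0:ℝ) 1 ×ˢ Set.Icc (0:ℝ) 1 ∧ p.1 + p.2 - p.1 * p.2 ≥ a} with hS_def
  set R : Set (ℝ × ℝ) := regionBetween g (fun _ => 1) (Set.Icc 0 1) with hR_def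
  have hRS : R ⊆ S := by
    rintro ⟨u, v⟩ ⟨hu, hv1, hv2⟩
    simp only [hS_def, Set.mem_setOf_eq, Set.mem_prod]
    have hv0 : 0 ≤ v := le_trans (hg0 u) (le_of_lt hv1)
    refine ⟨⟨hu, hv0, le_of_lt hv2⟩, ?_⟩
    by_cases h : u < a
    · have h1u : 0 < 1 - u := by linarith
      have : (a - u) / (1 - u) < v := by simpa [hg_def, h] using hv1
      rw [div_lt_iff₀ h1u] at this
      nlinarith
    · push_neg at h
      have hu1 : u ≤ 1 := hu.2
      nlinarith [hu.1]
  have hSR : S ⊆ R ∪ ({p : ℝ × ℝ | p.2 = g p.1} ∪ (Set.univ ×ˢ ({1} : Set ℝ))) := by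
    rintro ⟨u, v⟩ ⟨⟨hu, hv⟩, hcond⟩
    have hgv : g u ≤ v := by
      by_cases h : u < a
      · have h1u : 0 < 1 - u := by linarith
        simp only [hg_def, if_pos h]
        rw [div_le_iff₀ h1u]
        simp only [Set.mem_setOf_eq] at hcond
        nlinarith
      · simpa [hg_def, h] using hv.1
    rcases eq_or_lt_of_le hgv with h | h
    · exact Or.inr (Or.inl h.symm)
    · rcases eq_or_lt_of_le hv.2 with h2 | h2
      · exact Or.inr (Or.inr ⟨Set.mem_univ _, by simpa using h2⟩)
      · exact Or.inl ⟨hu, h, h2⟩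
  have hInt : IntegrableOn g (Set.Icc (0:ℝ) 1) := by
    apply Measure.integrableOn_of_bounded (M := 1)
    · simp [measure_Icc_lt_top.ne]
    · exact hgm.aestronglyMeasurable
    · filter_upwards with x
      rw [Real.norm_eq_abs, abs_le]
      exact ⟨by linarith [hg0 x], hg1 x⟩
  have hInt1 : IntegrableOn (fun _ : ℝ => (1:ℝ)) (Set.Icc (0:ℝ) 1) :=
    integrableOn_const measure_Icc_lt_top.ne
  have hvolR : volume R = ENNReal.ofReal (∫ y in Set.Icc (0:ℝ) 1, (1 - g y)) := by
    rw [hR_def, Measure.volume_eq_prod]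
    rw [volume_regionBetween_eq_integral hInt hInt1 measurableSet_Icc fun x _ => hg1 x]
    rfl
  have hvol : volume S = volume R := by
    apply le_antisymm
    · calc volume S ≤ volume (R ∪ ({p : ℝ × ℝ | p.2 = g p.1} ∪ (Set.univ ×ˢ ({1} : Set ℝ)))) :=
            measure_mono hSR
        _ ≤ volume R + volume ({p : ℝ × ℝ | p.2 = g p.1} ∪ (Set.univ ×ˢ ({1} : Set ℝ))) :=
            measure_union_le _ _
        _ ≤ volume R + (volume {p : ℝ × ℝ | p.2 = g p.1} + volume (Set.univ ×ˢ ({1} : Set ℝ))) :=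
            add_le_add le_rfl (measure_union_le _ _)
        _ = volume R := by rw [volume_graph_zero hgm, volume_top_line_zero]; simp
    · exact measure_mono hRS
  have key : ∫ y in Set.Icc (0:ℝ) 1, (1 - g y) = (1 - a) * (1 - Real.log (1 - a)) := by
    rw [MeasureTheory.integral_Icc_eq_integral_Ioc,
      ← intervalIntegral.integral_of_le (zero_le_one)]
    have hii : ∀ c d : ℝ, 0 ≤ c → c ≤ 1 → 0 ≤ d → d ≤ 1 →
        IntervalIntegrable (fun y => 1 - g y) volume c d := by
      intro c d hc hc1 hd0 hd
      rw [intervalIntegrable_iff]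
      have hsub : Set.uIoc c d ⊆ Set.Icc (0:ℝ) 1 := by
        rw [Set.uIoc]
        intro x hx
        exact ⟨le_trans (le_min hc hd0) hx.1.le, le_trans hx.2 (max_le hc1 hd)⟩
      have := MeasureTheory.IntegrableOn.mono_set (hInt1.sub hInt) hsub
      exact this
    have hsplit : (∫ y in (0:ℝ)..a, (1 - g y)) + (∫ y in a..(1:ℝ), (1 - g y))
        = ∫ y in (0:ℝ)..(1:ℝ), (1 - g y) :=
      intervalIntegral.integral_add_adjacent_intervals
        (hii 0 a le_rfl zero_le_one ha0.le ha1.le) (hii a 1 ha0.le ha1.le zero_le_one le_rfl)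
    rw [← hsplit]
    have h2 : (∫ y in a..(1:ℝ), (1 - g y)) = 1 - a := by
      rw [intervalIntegral.integral_congr (g := fun _ => (1:ℝ)) ?_]
      · simp
      · intro y hy
        rw [Set.uIcc_of_le ha1.le] at hy
        simp only [hg_def, if_neg (not_lt.2 hy.1), sub_zero]
    have h1 : (∫ y in (0:ℝ)..a, (1 - g y)) = (1 - a) * (- Real.log (1 - a)) := by
      rw [intervalIntegral.integral_congr (g := fun y => (1 - a) * (1 - y)⁻¹) ?_]
      · rw [intervalIntegral.integral_const_mul]
        have := intervalIntegral.integral_comp_sub_left (a := (0:ℝ)) (b := a)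
          (fun x => x⁻¹) 1
        rw [this, sub_zero, integral_inv ?_]
        · rw [Real.log_div one_ne_zero (by linarith), Real.log_one]
          ring
        · intro h
          rw [Set.uIcc_of_le (by linarith)] at h
          linarith [h.1]
      · intro y hy
        rw [Set.uIcc_of_le ha0.le] at hy
        have h1y : (0:ℝ) < 1 - y := by linarith [hy.2]
        rcases lt_or_eq_of_le hy.2 with h | h
        · simp only [hg_def, if_pos h]
          field_simp
          ring
        · subst h
          simp only [hg_def, if_neg (lt_irrefl y), sub_zero]
          rw [mul_inv_cancel₀ (by linarith : (1:ℝ) - y ≠ 0)]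
    rw [h1, h2]
    ring
  rw [hvol, hvolR, key]

lemma part1' {N : ℕ} (hN : 1 ≤ N) :
    (volume (copulaRegion (fun u v => u * v) N)).toReal
      = (1 - Real.exp (-1 / (N : ℝ))) * (1 - Real.log (1 - Real.exp (-1 / (N : ℝ)))) := by
  have hN0 : (0:ℝ) < N := by exact_mod_cast hN
  set a := Real.exp (-1 / (N : ℝ)) with ha_def
  have ha0 : 0 < a := Real.exp_pos _
  have ha1 : a < 1 := by
    rw [ha_def, Real.exp_lt_one_iff]
    exact div_neg_of_neg_of_pos (by norm_num) hN0
  have hset : copulaRegion (fun u v => u * v) N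
      = {p : ℝ × ℝ | p ∈ Set.Icc (0:ℝ) 1 ×ˢ Set.Icc (0:ℝ) 1 ∧ p.1 + p.2 - p.1 * p.2 ≥ a} := rfl
  rw [hset, area_formula ha0 ha1, ENNReal.toReal_ofReal]
  exact mul_nonneg (by linarith) (by linarith [Real.log_nonpos (by linarith) (by linarith : 1 - a ≤ 1)])

lemma part2bound {N : ℕ} (hN : 1 ≤ N) :
    |(1 - Real.exp (-1 / (N : ℝ))) * (1 - Real.log (1 - Real.exp (-1 / (N : ℝ))))
        - Real.log N / N| ≤ 3 * (1 / (N : ℝ)) := by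
  have hN0 : (0:ℝ) < N := by exact_mod_cast hN
  set t : ℝ := 1 / (N : ℝ) with ht_def
  have ht0 : 0 < t := by positivity
  have ht1 : t ≤ 1 := by
    rw [ht_def, div_le_one hN0]
    exact_mod_cast hN
  have htN : (N : ℝ) * t = 1 := by rw [ht_def]; field_simp
  have hmt : -1 / (N : ℝ) = -t := by rw [ht_def]; ring
  rw [hmt]
  set b : ℝ := 1 - Real.exp (-t) with hb_def
  have he1 : Real.exp (-t) < 1 := by
    rw [Real.exp_lt_one_iff]; linarith
  have hb0 : 0 < b := by rw [hb_def]; linarith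
  have hbt : b ≤ t := by
    have := Real.add_one_le_exp (-t)
    rw [hb_def]; linarith
  have heinv : Real.exp (-t) * (1 + t) ≤ 1 := by
    have h1 : 1 + t ≤ Real.exp t := by linarith [Real.add_one_le_exp t]
    have h2 : Real.exp (-t) * Real.exp t = 1 := by
      rw [← Real.exp_add]
      have h : -t + t = 0 := by ring
      rw [h, Real.exp_zero]
    nlinarith [Real.exp_pos (-t)]
  have htb : t - b ≤ t * t := by
    rw [hb_def]
    nlinarith
  have hblow : t ≤ b * (1 + t) := by
    rw [hb_def]; nlinarith
  set L : ℝ := Real.log t with hL_def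
  set lb : ℝ := Real.log b with hlb_def
  have hL0 : L ≤ 0 := Real.log_nonpos ht0.le ht1
  have hlogN : Real.log N = -L := by
    rw [hL_def, ht_def, one_div, Real.log_inv, neg_neg]
  have hLt : (-L) * t ≤ 1 := by
    have h1 : Real.log N ≤ (N : ℝ) - 1 := Real.log_le_sub_one_of_pos hN0
    rw [← hlogN]
    calc Real.log N * t ≤ ((N:ℝ) - 1) * t :=
          mul_le_mul_of_nonneg_right h1 ht0.le
      _ = 1 - t := by rw [sub_mul, htN, one_mul]
      _ ≤ 1 := by linarith
  have hlbL : lb ≤ L := Real.log_le_log hb0 hbt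
  have hD2 : L - lb ≤ t := by
    have h1 : Real.log (t / b) = L - lb := Real.log_div ht0.ne' hb0.ne'
    have h2 : t / b ≤ 1 + t := by
      rw [div_le_iff₀ hb0]; nlinarith
    have h3 : Real.log (t / b) ≤ t / b - 1 :=
      Real.log_le_sub_one_of_pos (by positivity)
    linarith
  have hE : b * (1 - lb) - Real.log N / (N : ℝ)
      = b + b * (L - lb) + (t - b) * L := by
    rw [hlogN]
    have : Real.log N / (N : ℝ) = Real.log N * t := by
      rw [ht_def]; ring
    rw [hlogN] at this
    rw [div_eq_mul_inv, ← one_div, ← ht_def]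
    ring
  rw [hE]
  have hA : b * (L - lb) ≤ t * t :=
    mul_le_mul hbt hD2 (by linarith) ht0.le
  have hB : 0 ≤ b * (L - lb) := mul_nonneg hb0.le (by linarith)
  have hC : (t - b) * L ≤ 0 := mul_nonpos_of_nonneg_of_nonpos (by linarith) hL0
  have hDD : t * t * L ≤ (t - b) * L := mul_le_mul_of_nonpos_right htb hL0
  have hE2 : -t ≤ t * t * L := by
    nlinarith [mul_le_mul_of_nonneg_left hLt ht0.le]
  have htt : t * t ≤ t := by nlinarith
  rw [abs_le]
  constructor
  · linarith
  · linarith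

/-- For the independence copula `C(u,v) = uv`, the measure
`λ(R_N) = e^{-1/N}(1 - e^{1/N})(log(1 - e^{-1/N}) - 1)` admits the asymptotic expansion
`λ(R_N) = (log N)/N + O(1/N)` as `N → ∞`. -/
theorem independence_copula_region_asymptotics :
    (∀ N : ℕ, 1 ≤ N →
      (volume (copulaRegion (fun u v => u * v) N)).toReal
        = Real.exp (-1 / (N : ℝ)) * (1 - Real.exp (1 / (N : ℝ)))
          * (Real.log (1 - Real.exp (-1 / (N : ℝ))) - 1)) ∧
    ((fun N : ℕ => (volume (copulaRegion (fun u v => u * v) N)).toReal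
        - Real.log N / (N : ℝ))
      =O[atTop] (fun N : ℕ => 1 / (N : ℝ))) := by
  constructor
  · intro N hN
    have hN0 : (0:ℝ) < N := by exact_mod_cast hN
    rw [part1' hN]
    have hae : Real.exp (-1 / (N : ℝ)) * Real.exp (1 / (N : ℝ)) = 1 := by
      rw [← Real.exp_add, show -1 / (N:ℝ) + 1 / (N:ℝ) = 0 by ring, Real.exp_zero]
    set a := Real.exp (-1 / (N : ℝ))
    have h : a * (1 - Real.exp (1 / (N : ℝ))) = a - 1 := by
      rw [mul_sub, mul_one, hae]
    rw [h]
    ring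
  · rw [isBigO_iff]
    refine ⟨3, ?_⟩
    filter_upwards [eventually_ge_atTop 1] with N hN
    rw [part1' hN, Real.norm_eq_abs, Real.norm_eq_abs,
      abs_of_nonneg (by positivity : (0:ℝ) ≤ 1 / (N : ℝ))]
    exact part2bound hN
end

section
/- Let S = {(U_i, V_i)}_{i=1}^N be i.i.d. bivariate random variables with U_i independent of V_i, Lipschitz continuous joint CDF, and invertible marginal CDFs (so the copula is C(u, v) = uv). Then E[|Pareto(S)|] = Θ(log N) as N → ∞. -/
open MeasureTheory ProbabilityTheory Filter Asymptotics Set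

/-!
Applying the strictly increasing marginal CDFs to both coordinates does not change which points
are Pareto-optimal, and turns each sample into a uniform point of the unit square (uniform
marginals by the probability integral transform, independent coordinates by assumption).
For `N = n + 1` uniform points, a point `x` is Pareto-optimal iff none of the other `n` points
lies in `[x₁, 1] × (x₂, 1]`, which has probability `(1 - (1 - x₁)(1 - x₂))ⁿ`; integrating over
`x` gives `H_N / N`. So the expected size of the Pareto set is exactly the harmonic number `H_N`,
and `H_N - log N` converges to the Euler–Mascheroni constant.
-/

theorem isParetoPoint_prodMap_iff {f g : ℝ → ℝ} (hf : StrictMono f) (hg : StrictMono g)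
    {N : ℕ} (p : Fin N → ℝ × ℝ) (i : Fin N) :
    IsParetoPoint (Prod.map f g ∘ p) i ↔ IsParetoPoint p i := by
  simp only [IsParetoPoint, Function.comp_apply, Prod.map_fst, Prod.map_snd, gt_iff_lt,
    hf.lt_iff_lt, hg.lt_iff_lt]

theorem paretoCard_prodMap {f g : ℝ → ℝ} (hf : StrictMono f) (hg : StrictMono g)
    {N : ℕ} (p : Fin N → ℝ × ℝ) : paretoCard (Prod.map f g ∘ p) = paretoCard p := by
  simp only [paretoCard, isParetoPoint_prodMap_iff hf hg]

theorem measurableSet_isParetoPoint {N : ℕ} (i : Fin N) :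
    MeasurableSet {p : Fin N → ℝ × ℝ | IsParetoPoint p i} := by
  simp only [IsParetoPoint, ofPred_forall]
  exact .iInter fun j ↦ (measurableSet_lt (measurable_pi_apply i).snd
    (measurable_pi_apply j).snd).imp (measurableSet_lt (measurable_pi_apply j).fst
    (measurable_pi_apply i).fst)

theorem paretoCard_eq_sum_indicator {N : ℕ} (p : Fin N → ℝ × ℝ) :
    (paretoCard p : ℝ) = ∑ i, {p | IsParetoPoint p i}.indicator 1 p := by
  classical
  rw [paretoCard, ncard_eq_toFinset_card', toFinset_ofPred, Finset.card_filter]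
  push_cast
  simp [indicator_apply]

theorem measurable_paretoCard {N : ℕ} :
    Measurable fun p : Fin N → ℝ × ℝ ↦ (paretoCard p : ℝ) := by
  simp_rw [paretoCard_eq_sum_indicator]
  exact Finset.measurable_sum _ fun i _ ↦ measurable_one.indicator (measurableSet_isParetoPoint i)

theorem integral_paretoCard {N : ℕ} (ν : Measure (Fin N → ℝ × ℝ)) [IsFiniteMeasure ν] :
    ∫ p, (paretoCard p : ℝ) ∂ν = ∑ i, ν.real {p | IsParetoPoint p i} := by
  simp_rw [paretoCard_eq_sum_indicator]
  rw [integral_finsetSum _ fun i _ ↦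
    (integrable_const 1).indicator (measurableSet_isParetoPoint i)]
  exact Finset.sum_congr rfl fun i _ ↦ integral_indicator_one (measurableSet_isParetoPoint i)

theorem pi_isParetoPoint_eq_lintegral {n : ℕ} (η : Measure (ℝ × ℝ)) [SigmaFinite η]
    (i : Fin (n + 1)) :
    Measure.pi (fun _ ↦ η) {p | IsParetoPoint p i}
      = ∫⁻ x, η {q | q.2 > x.2 → x.1 > q.1} ^ n ∂η := by
  set S : Set ((ℝ × ℝ) × (Fin n → ℝ × ℝ)) :=
    {xq | ∀ j, xq.2 j ∈ {q : ℝ × ℝ | q.2 > xq.1.2 → xq.1.1 > q.1}}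
  have hS : MeasurableSet S := by
    simp only [S, mem_ofPred_eq, ofPred_forall]
    exact .iInter fun j ↦ (measurableSet_lt measurable_fst.snd
      ((measurable_pi_apply j).comp measurable_snd).snd).imp
      (measurableSet_lt ((measurable_pi_apply j).comp measurable_snd).fst measurable_fst.fst)
  have hpre : MeasurableEquiv.piFinSuccAbove (fun _ ↦ ℝ × ℝ) i ⁻¹' S
      = {p | IsParetoPoint p i} := by
    ext p
    have he : MeasurableEquiv.piFinSuccAbove (fun _ ↦ ℝ × ℝ) i p
        = (p i, fun j ↦ p (i.succAbove j)) := rfl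
    simp only [S, mem_preimage, he, mem_ofPred_eq, IsParetoPoint]
    rw [Fin.forall_iff_succAbove i]
    simp
  rw [← hpre, (measurePreserving_piFinSuccAbove (fun _ ↦ η) i).measure_preimage
    hS.nullMeasurableSet, Measure.prod_apply hS]
  refine lintegral_congr fun x ↦ ?_
  rw [show Prod.mk x ⁻¹' S = univ.pi fun _ ↦ {q : ℝ × ℝ | q.2 > x.2 → x.1 > q.1} by ext; simp [S],
    Measure.pi_pi, Finset.prod_const, Finset.card_univ, Fintype.card_fin]

noncomputable def unitUniform : Measure ℝ := volume.restrict (Ioc 0 1)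

instance : IsProbabilityMeasure unitUniform :=
  ⟨by simp [unitUniform]⟩

theorem unitUniform_Iic (a : ℝ) : unitUniform (Iic a) = ENNReal.ofReal (min 1 a) := by
  rw [unitUniform, Measure.restrict_apply measurableSet_Iic, inter_comm, Ioc_inter_Iic,
    Real.volume_Ioc, sub_zero]

theorem unitUniform_Ici {u : ℝ} (hu : 0 < u) : unitUniform (Ici u) = ENNReal.ofReal (1 - u) := by
  have hinter : Ici u ∩ Ioc 0 1 = Icc u 1 := by
    ext; simp only [mem_inter_iff, mem_Ici, mem_Ioc, mem_Icc]; grind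
  rw [unitUniform, Measure.restrict_apply measurableSet_Ici, hinter, Real.volume_Icc]

theorem unitUniform_Ioi {v : ℝ} (hv : 0 ≤ v) : unitUniform (Ioi v) = ENNReal.ofReal (1 - v) := by
  have hinter : Ioi v ∩ Ioc 0 1 = Ioc v 1 := by
    ext; simp only [mem_inter_iff, mem_Ioi, mem_Ioc]; grind
  rw [unitUniform, Measure.restrict_apply measurableSet_Ioi, hinter, Real.volume_Ioc]

theorem map_eq_unitUniform_of_cdf {Ω : Type*} [MeasurableSpace Ω] {μ : Measure Ω}
    [IsProbabilityMeasure μ] {T : Ω → ℝ} (hT : Measurable T) {G : ℝ → ℝ} (hG : StrictMono G)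
    (hGrange : range G = Ioo 0 1) (hcdf : ∀ b, μ.real {ω | T ω ≤ b} = G b) :
    μ.map (G ∘ T) = unitUniform := by
  have hGT : Measurable (G ∘ T) := hG.monotone.measurable.comp hT
  have hmem (ω : Ω) : G (T ω) ∈ Ioo 0 1 := hGrange ▸ mem_range_self _
  refine Measure.ext_of_Iic _ _ fun a ↦ ?_
  rw [Measure.map_apply hGT measurableSet_Iic, unitUniform_Iic]
  rcases le_or_gt a 0 with ha | ha
  · have hpre : G ∘ T ⁻¹' Iic a = ∅ :=
      eq_empty_of_forall_notMem fun ω h ↦ (ha.trans_lt (hmem ω).1).not_ge h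
    rw [hpre, measure_empty, min_eq_right (by linarith), ENNReal.ofReal_of_nonpos ha]
  rcases lt_or_ge a 1 with ha' | ha'
  · obtain ⟨b, rfl⟩ : a ∈ range G := hGrange ▸ ⟨ha, ha'⟩
    have hpre : G ∘ T ⁻¹' Iic (G b) = {ω | T ω ≤ b} := by ext; simp [hG.le_iff_le]
    rw [hpre, min_eq_right ha'.le, ← hcdf, ofReal_measureReal]
  · have hpre : G ∘ T ⁻¹' Iic a = univ :=
      eq_univ_of_forall fun ω ↦ (hmem ω).2.le.trans ha'
    rw [hpre, measure_univ, min_eq_left ha', ENNReal.ofReal_one]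

theorem unitUniform_prod_notDominating {x : ℝ × ℝ} (hx : x ∈ Ioc (0 : ℝ) 1 ×ˢ Ioc (0 : ℝ) 1) :
    (unitUniform.prod unitUniform) {q | q.2 > x.2 → x.1 > q.1}
      = ENNReal.ofReal (1 - (1 - x.1) * (1 - x.2)) := by
  obtain ⟨⟨hx₁, hx₁'⟩, hx₂, hx₂'⟩ := hx
  have hcompl : {q : ℝ × ℝ | q.2 > x.2 → x.1 > q.1} = (Ici x.1 ×ˢ Ioi x.2)ᶜ := by
    ext q; simp [imp_iff_not_or, or_comm]
  rw [hcompl, prob_compl_eq_one_sub (measurableSet_Ici.prod measurableSet_Ioi), Measure.prod_prod,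
    unitUniform_Ici hx₁, unitUniform_Ioi hx₂.le, ← ENNReal.ofReal_mul (by linarith),
    ← ENNReal.ofReal_one, ← ENNReal.ofReal_sub _ (by nlinarith)]

theorem integral_one_sub_mul_one_sub_pow (n : ℕ) (x : ℝ) :
    ∫ y in (0 : ℝ)..1, (1 - (1 - x) * (1 - y)) ^ n
      = (∑ k ∈ Finset.range (n + 1), x ^ k) / (n + 1) := by
  rcases eq_or_ne x 1 with rfl | hx
  · simp [field]
  have hc : 1 - x ≠ 0 := sub_ne_zero.2 hx.symm
  have hsub (y : ℝ) : 1 - (1 - x) * (1 - y) = (1 - x) * y + x := by ring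
  simp_rw [hsub]
  rw [intervalIntegral.integral_comp_mul_add (fun z ↦ z ^ n) hc, integral_pow, smul_eq_mul,
    mul_zero, zero_add, mul_one, sub_add_cancel, one_pow]
  field_simp
  linear_combination geom_sum_mul x (n + 1)

theorem integral_integral_one_sub_mul_one_sub_pow (n : ℕ) :
    ∫ x in (0 : ℝ)..1, ∫ y in (0 : ℝ)..1, (1 - (1 - x) * (1 - y)) ^ n
      = harmonic (n + 1) / (n + 1) := by
  simp_rw [integral_one_sub_mul_one_sub_pow, Finset.sum_div]
  rw [intervalIntegral.integral_finsetSum fun k _ ↦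
    ((continuous_pow k).div_const _).intervalIntegrable 0 1]
  simp [intervalIntegral.integral_div, harmonic, Finset.sum_div]

theorem measureReal_pi_unitUniform_isParetoPoint {n : ℕ} (i : Fin (n + 1)) :
    (Measure.pi fun _ ↦ unitUniform.prod unitUniform).real {p | IsParetoPoint p i}
      = harmonic (n + 1) / (n + 1) := by
  set g : ℝ × ℝ → ℝ := fun x ↦ (1 - (1 - x.1) * (1 - x.2)) ^ n
  have hsupp : ∀ᵐ x ∂unitUniform.prod unitUniform, x ∈ Ioc (0 : ℝ) 1 ×ˢ Ioc (0 : ℝ) 1 := by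
    rw [unitUniform, Measure.prod_restrict]
    exact ae_restrict_mem (measurableSet_Ioc.prod measurableSet_Ioc)
  have hbase_mem : ∀ x ∈ Ioc (0 : ℝ) 1 ×ˢ Ioc (0 : ℝ) 1,
      1 - (1 - x.1) * (1 - x.2) ∈ Icc 0 1 := by
    rintro x ⟨⟨hx₁, hx₁'⟩, hx₂, hx₂'⟩
    constructor <;> nlinarith
  have hg_mem : ∀ x ∈ Ioc (0 : ℝ) 1 ×ˢ Ioc (0 : ℝ) 1, g x ∈ Icc 0 1 := fun x hx ↦
    ⟨pow_nonneg (hbase_mem x hx).1 n, pow_le_one₀ (hbase_mem x hx).1 (hbase_mem x hx).2⟩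
  have hg_nonneg : 0 ≤ᵐ[unitUniform.prod unitUniform] g :=
    hsupp.mono fun x hx ↦ (hg_mem x hx).1
  have hg_int : Integrable g (unitUniform.prod unitUniform) :=
    (integrable_const 1).mono' (by fun_prop) (hsupp.mono fun x hx ↦ by
      rw [Real.norm_of_nonneg (hg_mem x hx).1]; exact (hg_mem x hx).2)
  have hlintegral : Measure.pi (fun _ ↦ unitUniform.prod unitUniform) {p | IsParetoPoint p i}
      = ∫⁻ x, ENNReal.ofReal (g x) ∂unitUniform.prod unitUniform := by
    rw [pi_isParetoPoint_eq_lintegral]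
    refine lintegral_congr_ae (hsupp.mono fun x hx ↦ ?_)
    simp only [g]
    rw [unitUniform_prod_notDominating hx, ← ENNReal.ofReal_pow (hbase_mem x hx).1]
  rw [measureReal_def, hlintegral, ← ofReal_integral_eq_lintegral_ofReal hg_int hg_nonneg,
    ENNReal.toReal_ofReal (integral_nonneg_of_ae hg_nonneg), integral_prod _ hg_int]
  simpa [unitUniform, ← intervalIntegral.integral_of_le zero_le_one] using
    integral_integral_one_sub_mul_one_sub_pow n

theorem integral_paretoCard_pi_unitUniform (N : ℕ) :
    ∫ p, (paretoCard p : ℝ) ∂(Measure.pi fun _ : Fin N ↦ unitUniform.prod unitUniform)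
      = harmonic N := by
  rw [integral_paretoCard]
  cases N with
  | zero => simp
  | succ n =>
    simp_rw [measureReal_pi_unitUniform_isParetoPoint]
    rw [Finset.sum_const, Finset.card_univ, Fintype.card_fin, nsmul_eq_mul]
    push_cast
    field_simp

theorem isTheta_harmonic_log :
    (fun N : ℕ ↦ (harmonic N : ℝ)) =Θ[atTop] fun N ↦ Real.log N := by
  refine IsEquivalent.isTheta ?_
  have hlog : Tendsto (fun N : ℕ ↦ ‖Real.log N‖) atTop atTop :=
    tendsto_norm_atTop_atTop.comp (Real.tendsto_log_atTop.comp tendsto_natCast_atTop_atTop)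
  exact (Real.tendsto_harmonic_sub_log.isBigO_one ℝ).trans_isLittleO
    ((isLittleO_one_left_iff ℝ).2 hlog)
theorem expected_pareto_card_independent_coords_general
    {Ω : Type*} [MeasurableSpace Ω] (μ : Measure Ω) [IsProbabilityMeasure μ]
    (W : ℕ → Ω → ℝ × ℝ) (hWmeas : ∀ i, Measurable (W i))
    (hindep : iIndepFun W μ)
    (hident : ∀ i, IdentDistrib (W i) (W 0) μ μ)
    -- for each sample, the two coordinates are independent
    (hcoord : ∀ i, IndepFun (fun ω => (W i ω).1) (fun ω => (W i ω).2) μ)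
    (FU FV : ℝ → ℝ)
    -- F is the joint CDF and FU, FV the marginal CDFs of the common distribution
    (hFU : ∀ u, FU u = (μ {ω | (W 0 ω).1 ≤ u}).toReal)
    (hFV : ∀ v, FV v = (μ {ω | (W 0 ω).2 ≤ v}).toReal)
    -- the marginal CDFs are invertible (strictly monotone bijections onto (0,1))
    (hFUmono : StrictMono FU) (hFUrange : Set.range FU = Set.Ioo 0 1)
    (hFVmono : StrictMono FV) (hFVrange : Set.range FV = Set.Ioo 0 1) :
    (fun N : ℕ => ∫ ω, (paretoCard (fun i : Fin N => W i ω) : ℝ) ∂μ)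
      =Θ[atTop] (fun N : ℕ => Real.log N) := by
  have hFUmeas := hFUmono.monotone.measurable
  have hFVmeas := hFVmono.monotone.measurable
  have hφ : Measurable (Prod.map FU FV) := hFUmeas.prodMap hFVmeas
  have hlaw₀ : μ.map (Prod.map FU FV ∘ W 0) = unitUniform.prod unitUniform := by
    have hprod := ((hcoord 0).comp hFUmeas hFVmeas).map_prod_eq_prod_map_map
      (hFUmeas.comp (hWmeas 0).fst).aemeasurable (hFVmeas.comp (hWmeas 0).snd).aemeasurable
    rwa [map_eq_unitUniform_of_cdf (hWmeas 0).fst hFUmono hFUrange fun u ↦ (hFU u).symm,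
      map_eq_unitUniform_of_cdf (hWmeas 0).snd hFVmono hFVrange fun v ↦ (hFV v).symm] at hprod
  have hlaw (i : ℕ) : μ.map (Prod.map FU FV ∘ W i) = unitUniform.prod unitUniform :=
    ((hident i).comp hφ).map_eq.trans hlaw₀
  have hpi (N : ℕ) : μ.map (fun ω ↦ Prod.map FU FV ∘ fun i : Fin N ↦ W i ω)
      = Measure.pi fun _ ↦ unitUniform.prod unitUniform := by
    refine (((hindep.comp _ fun _ ↦ hφ).precomp Fin.val_injective).map_fun_eq_pi_map
      fun i : Fin N ↦ (hφ.comp (hWmeas i)).aemeasurable).trans ?_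
    exact congrArg Measure.pi (funext fun i ↦ hlaw i)
  have hexp (N : ℕ) : ∫ ω, (paretoCard (fun i : Fin N ↦ W i ω) : ℝ) ∂μ = harmonic N := by
    simp_rw [← paretoCard_prodMap hFUmono hFVmono (fun i : Fin N ↦ W i _)]
    rw [← integral_map (by fun_prop) measurable_paretoCard.aestronglyMeasurable, hpi,
      integral_paretoCard_pi_unitUniform]
  simpa only [hexp] using isTheta_harmonic_log

/-- For i.i.d. samples `(U_i, V_i)` with `U_i` independent of `V_i`, Lipschitz joint CDF,
and invertible marginal CDFs (so the copula is `C(u,v) = uv`), the expected size of the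
Pareto set of the first `N` samples is `Θ(log N)`. -/
theorem expected_pareto_card_independent_coords
    {Ω : Type*} [MeasurableSpace Ω] (μ : Measure Ω) [IsProbabilityMeasure μ]
    (W : ℕ → Ω → ℝ × ℝ) (hWmeas : ∀ i, Measurable (W i))
    (hindep : iIndepFun W μ)
    (hident : ∀ i, IdentDistrib (W i) (W 0) μ μ)
    -- for each sample, the two coordinates are independent
    (hcoord : ∀ i, IndepFun (fun ω => (W i ω).1) (fun ω => (W i ω).2) μ)
    (F : ℝ → ℝ → ℝ) (FU FV : ℝ → ℝ)
    -- F is the joint CDF and FU, FV the marginal CDFs of the common distribution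
    (hF : ∀ u v, F u v = (μ {ω | (W 0 ω).1 ≤ u ∧ (W 0 ω).2 ≤ v}).toReal)
    (hFU : ∀ u, FU u = (μ {ω | (W 0 ω).1 ≤ u}).toReal)
    (hFV : ∀ v, FV v = (μ {ω | (W 0 ω).2 ≤ v}).toReal)
    -- the joint CDF is Lipschitz continuous
    (hLip : ∃ K : NNReal, LipschitzWith K (fun p : ℝ × ℝ => F p.1 p.2))
    -- the marginal CDFs are invertible (strictly monotone bijections onto (0,1))
    (hFUmono : StrictMono FU) (hFUrange : Set.range FU = Set.Ioo 0 1)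
    (hFVmono : StrictMono FV) (hFVrange : Set.range FV = Set.Ioo 0 1) :
    (fun N : ℕ => ∫ ω, (paretoCard (fun i : Fin N => W i ω) : ℝ) ∂μ)
      =Θ[atTop] (fun N : ℕ => Real.log N) :=
  expected_pareto_card_independent_coords_general μ W hWmeas hindep hident hcoord FU FV hFU hFV
    hFUmono hFUrange hFVmono hFVrange
end

section
/- For the Fréchet–Hoeffding lower-bound copula W(u, v) = max(u + v − 1, 0) and R_N := {(u, v) ∈ [0,1]² : u + v − W(u, v) ≥ e^{−1/N}}, the complement [0,1]² \ R_N is the triangle with vertices (0, 0), (0, e^{−1/N}), (e^{−1/N}, 0); hence λ(R_N) = 1 − (1/2)e^{−2/N} = 1/2 + O(1/N) as N → ∞, and consequently for i.i.d. samples with Lipschitz joint CDF, invertible marginals, and copula W, E[|Pareto(S)|] = Θ(N). -/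
open MeasureTheory ProbabilityTheory Filter Asymptotics Set

/-- The Fréchet–Hoeffding lower-bound copula `W(u,v) = max(u + v - 1, 0)`. -/
noncomputable def frechetW (u v : ℝ) : ℝ := max (u + v - 1) 0

/-! On the unit square `u + v - W(u, v) = min (u + v) 1`, so `R_N` is cut out by
`u + v ≥ e^{-1/N}` and its complement is the corner triangle of area `e^{-2/N} / 2`; the triangle
is computed as a region under a graph, up to a null segment of the axis.

A pair `(X, Y)` with copula `W` is countermonotone: `F_U(X) + F_V(Y) = 1` almost surely. Indeed,
for `F_U(u) = q` and `F_V(v) = 1 - q` the formula for `W` makes `{X ≤ u, Y ≤ v}` null, and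
inclusion–exclusion with the marginals makes `{X > u, Y > v}` null; a countable union over
rational `q` covers the event `F_U(X) + F_V(Y) ≠ 1`. Points on a decreasing curve are all
Pareto-optimal, so `|Pareto(S)| = N` almost surely and the expectation is exactly `N`. -/

def cornerTriangle (c : ℝ) : Set (ℝ × ℝ) :=
  {p | 0 ≤ p.1 ∧ 0 ≤ p.2 ∧ p.1 + p.2 < c}

lemma add_sub_frechetW (u v : ℝ) : u + v - frechetW u v = min (u + v) 1 := by
  rw [frechetW, ← min_sub_sub_left, sub_sub_cancel, sub_zero, min_comm]

lemma exp_neg_div_natCast_le_one {a : ℝ} (ha : 0 ≤ a) (N : ℕ) : Real.exp (-a / N) ≤ 1 :=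
  Real.exp_le_one_iff.2 (div_nonpos_of_nonpos_of_nonneg (neg_nonpos.2 ha) N.cast_nonneg)

lemma cornerTriangle_subset_unitSquare {c : ℝ} (hc : c ≤ 1) :
    cornerTriangle c ⊆ Icc (0 : ℝ) 1 ×ˢ Icc (0 : ℝ) 1 := by
  rintro p ⟨h1, h2, h3⟩
  exact ⟨⟨h1, by linarith⟩, h2, by linarith⟩

lemma measurableSet_cornerTriangle (c : ℝ) : MeasurableSet (cornerTriangle c) :=
  (measurableSet_le measurable_const measurable_fst).inter <|
    (measurableSet_le measurable_const measurable_snd).inter <|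
      measurableSet_lt (measurable_fst.add measurable_snd) measurable_const

lemma cornerTriangle_diff_axis (c : ℝ) :
    cornerTriangle c \ univ ×ˢ {0} = regionBetween 0 (fun x => c - x) (Icc 0 c) := by
  ext ⟨x, y⟩
  simp only [cornerTriangle, regionBetween, Set.mem_sdiff, mem_ofPred_eq, mem_prod, mem_univ,
    mem_singleton_iff, true_and, mem_Icc, mem_Ioo, Pi.zero_apply]
  constructor
  · rintro ⟨⟨hx, hy, hxy⟩, hy0⟩
    exact ⟨⟨hx, by linarith⟩, lt_of_le_of_ne hy (Ne.symm hy0), by linarith⟩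
  · rintro ⟨⟨hx, -⟩, hy, hxy⟩
    exact ⟨⟨hx, hy.le, by linarith⟩, hy.ne'⟩

lemma volume_cornerTriangle {c : ℝ} (hc : 0 ≤ c) :
    volume (cornerTriangle c) = ENNReal.ofReal (c ^ 2 / 2) := by
  have haxis : volume ((univ : Set ℝ) ×ˢ {(0 : ℝ)}) = 0 := by
    rw [Measure.volume_eq_prod ℝ ℝ, Measure.prod_prod, Real.volume_singleton, mul_zero]
  rw [← measure_sdiff_null haxis, cornerTriangle_diff_axis, Measure.volume_eq_prod ℝ ℝ,
    volume_regionBetween_eq_integral (f := 0) integrableOn_zero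
      (by fun_prop : Continuous fun x : ℝ => c - x).integrableOn_Icc measurableSet_Icc
      fun x hx => by simpa using hx.2,
    integral_Icc_eq_integral_Ioc, ← intervalIntegral.integral_of_le hc]
  congr 1
  simp [intervalIntegral.integral_comp_sub_left (fun x => x) c]

lemma unitSquare_diff_copulaRegion_frechetW (N : ℕ) :
    (Icc (0 : ℝ) 1 ×ˢ Icc (0 : ℝ) 1) \ copulaRegion frechetW N
      = cornerTriangle (Real.exp (-1 / (N : ℝ))) := by
  have hc := exp_neg_div_natCast_le_one zero_le_one N
  ext p
  simp only [copulaRegion, cornerTriangle, add_sub_frechetW, Set.mem_sdiff, mem_ofPred_eq,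
    mem_prod, mem_Icc, ge_iff_le, le_min_iff, not_and, not_le]
  constructor
  · rintro ⟨hsq, h⟩
    exact ⟨hsq.1.1, hsq.2.1, lt_of_not_ge fun h' => (h hsq h').not_ge hc⟩
  · rintro ⟨h1, h2, h⟩
    exact ⟨⟨⟨h1, by linarith⟩, h2, by linarith⟩, fun _ h' => absurd h' (not_le.2 h)⟩

lemma volume_copulaRegion_frechetW (N : ℕ) :
    volume.real (copulaRegion frechetW N) = 1 - 1 / 2 * Real.exp (-2 / (N : ℝ)) := by
  have hc := exp_neg_div_natCast_le_one zero_le_one N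
  have hsq : volume (Icc (0 : ℝ) 1 ×ˢ Icc (0 : ℝ) 1) = 1 := by
    rw [Measure.volume_eq_prod ℝ ℝ, Measure.prod_prod, Real.volume_Icc]; norm_num
  have hregion : copulaRegion frechetW N
      = (Icc (0 : ℝ) 1 ×ˢ Icc (0 : ℝ) 1) \ cornerTriangle (Real.exp (-1 / (N : ℝ))) := by
    rw [← unitSquare_diff_copulaRegion_frechetW, sdiff_sdiff_cancel_left fun p hp => hp.1]
  rw [hregion, measureReal_sdiff (cornerTriangle_subset_unitSquare hc)
      (measurableSet_cornerTriangle _) (by rw [hsq]; exact ENNReal.one_ne_top),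
    measureReal_def, measureReal_def, hsq, ENNReal.toReal_one,
    volume_cornerTriangle (Real.exp_pos _).le, ENNReal.toReal_ofReal (by positivity),
    ← Real.exp_nat_mul]
  push_cast
  ring_nf

lemma volume_copulaRegion_frechetW_sub_half_isBigO :
    (fun N : ℕ => volume.real (copulaRegion frechetW N) - 1 / 2)
      =O[atTop] fun N : ℕ => 1 / (N : ℝ) := by
  refine IsBigO.of_bound 1 (Eventually.of_forall fun N => ?_)
  have hlin : -2 / (N : ℝ) = -2 * (1 / N) := by ring
  have hlow := Real.add_one_le_exp (-2 / (N : ℝ))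
  have hupp := exp_neg_div_natCast_le_one zero_le_two N
  rw [volume_copulaRegion_frechetW, Real.norm_eq_abs, Real.norm_eq_abs, one_mul,
    abs_of_nonneg (by linarith), abs_of_nonneg (by positivity)]
  linarith

section Countermonotone

variable {Ω : Type*} [MeasurableSpace Ω] {μ : Measure Ω}

lemma ae_add_eq_one_of_measure_null {A B : Ω → ℝ}
    (hA : ∀ ω, A ω ∈ Icc (0 : ℝ) 1) (hB : ∀ ω, B ω ∈ Icc (0 : ℝ) 1)
    (hlow : ∀ q ∈ Ioo (0 : ℝ) 1, μ {ω | A ω < q ∧ B ω < 1 - q} = 0)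
    (hhigh : ∀ q ∈ Ioo (0 : ℝ) 1, μ {ω | q < A ω ∧ 1 - q < B ω} = 0) :
    ∀ᵐ ω ∂μ, A ω + B ω = 1 := by
  have hcover : {ω | ¬A ω + B ω = 1} ⊆ ⋃ (q : ℚ) (_ : (q : ℝ) ∈ Ioo (0 : ℝ) 1),
      {ω | A ω < q ∧ B ω < 1 - q} ∪ {ω | q < A ω ∧ 1 - q < B ω} := by
    intro ω hω
    obtain ⟨hA0, hA1⟩ := hA ω
    obtain ⟨hB0, hB1⟩ := hB ω
    simp only [mem_iUnion, mem_union, mem_ofPred_eq]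
    rcases lt_or_gt_of_ne hω with h | h
    · obtain ⟨q, hAq, hqB⟩ := exists_rat_btwn (show A ω < 1 - B ω by linarith)
      exact ⟨q, ⟨by linarith, by linarith⟩, Or.inl ⟨hAq, by linarith⟩⟩
    · obtain ⟨q, hBq, hqA⟩ := exists_rat_btwn (show 1 - B ω < A ω by linarith)
      exact ⟨q, ⟨by linarith, by linarith⟩, Or.inr ⟨hqA, by linarith⟩⟩
  exact measure_mono_null hcover <| measure_iUnion_null fun q => measure_iUnion_null fun hq =>
    measure_union_null (hlow q hq) (hhigh q hq)

variable [IsProbabilityMeasure μ] {X : Ω → ℝ × ℝ} {FU FV : ℝ → ℝ}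

lemma measure_fst_le_snd_le_eq_zero
    (hF : ∀ u v, μ.real {ω | (X ω).1 ≤ u ∧ (X ω).2 ≤ v} = frechetW (FU u) (FV v))
    {u v : ℝ} (huv : FU u + FV v ≤ 1) : μ {ω | (X ω).1 ≤ u ∧ (X ω).2 ≤ v} = 0 := by
  rw [← measureReal_eq_zero_iff, hF, frechetW, max_eq_right (by linarith)]

lemma measure_lt_fst_lt_snd_eq_zero (hX : AEMeasurable X μ)
    (hF : ∀ u v, μ.real {ω | (X ω).1 ≤ u ∧ (X ω).2 ≤ v} = frechetW (FU u) (FV v))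
    (hFU : ∀ u, μ.real {ω | (X ω).1 ≤ u} = FU u)
    (hFV : ∀ v, μ.real {ω | (X ω).2 ≤ v} = FV v)
    {u v : ℝ} (huv : 1 ≤ FU u + FV v) : μ {ω | u < (X ω).1 ∧ v < (X ω).2} = 0 := by
  set A := {ω | (X ω).1 ≤ u}
  set B := {ω | (X ω).2 ≤ v}
  have hA : NullMeasurableSet A μ := hX.fst.nullMeasurable measurableSet_Iic
  have hB : NullMeasurableSet B μ := hX.snd.nullMeasurable measurableSet_Iic
  have hunion : μ.real (A ∪ B) = 1 := by
    have := measureReal_union_add_inter₀ (μ := μ) (s := A) hB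
    have hinter : μ.real (A ∩ B) = FU u + FV v - 1 := by
      rw [← max_eq_left (sub_nonneg.2 huv), ← frechetW, ← hF]; rfl
    rw [hinter, hFU, hFV] at this
    linarith
  have hcompl : {ω | u < (X ω).1 ∧ v < (X ω).2} = (A ∪ B)ᶜ := by
    ext ω
    simp [A, B]
  rw [hcompl, ← measureReal_eq_zero_iff,
    probReal_compl_eq_one_sub₀ (hA.union hB), hunion, sub_self]

lemma ae_add_eq_one_of_copula_frechetW (hX : AEMeasurable X μ)
    (hF : ∀ u v, μ.real {ω | (X ω).1 ≤ u ∧ (X ω).2 ≤ v} = frechetW (FU u) (FV v))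
    (hFU : ∀ u, μ.real {ω | (X ω).1 ≤ u} = FU u)
    (hFV : ∀ v, μ.real {ω | (X ω).2 ≤ v} = FV v)
    (hFUmono : StrictMono FU) (hFUrange : range FU = Ioo 0 1)
    (hFVmono : StrictMono FV) (hFVrange : range FV = Ioo 0 1) :
    ∀ᵐ ω ∂μ, FU (X ω).1 + FV (X ω).2 = 1 := by
  have hmem : ∀ {G : ℝ → ℝ}, range G = Ioo 0 1 → ∀ x, G x ∈ Icc (0 : ℝ) 1 :=
    fun hG x => Ioo_subset_Icc_self (hG ▸ mem_range_self x)
  refine ae_add_eq_one_of_measure_null (fun ω => hmem hFUrange _) (fun ω => hmem hFVrange _)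
    (fun q hq => ?_) (fun q hq => ?_)
  all_goals
    obtain ⟨u, rfl⟩ : q ∈ range FU := hFUrange ▸ hq
    obtain ⟨v, hv⟩ : 1 - FU u ∈ range FV :=
      hFVrange ▸ ⟨by linarith [hq.2], by linarith [hq.1]⟩
  · refine measure_mono_null (fun ω hω => ?_)
      (measure_fst_le_snd_le_eq_zero hF (by linarith : FU u + FV v ≤ 1))
    rw [← hv] at hω
    exact ⟨(hFUmono.lt_iff_lt.1 hω.1).le, (hFVmono.lt_iff_lt.1 hω.2).le⟩
  · refine measure_mono_null (fun ω hω => ?_)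
      (measure_lt_fst_lt_snd_eq_zero hX hF hFU hFV (by linarith : 1 ≤ FU u + FV v))
    rw [← hv] at hω
    exact ⟨hFUmono.lt_iff_lt.1 hω.1, hFVmono.lt_iff_lt.1 hω.2⟩

end Countermonotone

section Pareto

variable {N : ℕ} {p : Fin N → ℝ × ℝ}

lemma paretoCard_eq_of_forall_isParetoPoint (h : ∀ i, IsParetoPoint p i) :
    paretoCard p = N := by
  simp [paretoCard, h]

lemma isParetoPoint_of_forall_add_eq {FU FV : ℝ → ℝ} (hFU : Monotone FU)
    (hFV : StrictMono FV) {c : ℝ} (hp : ∀ i, FU (p i).1 + FV (p i).2 = c) (i : Fin N) :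
    IsParetoPoint p i := by
  intro j hj
  have hFUlt : FU (p j).1 < FU (p i).1 := by linarith [hp i, hp j, hFV hj]
  exact hFU.reflect_lt hFUlt

end Pareto

lemma integral_paretoCard_eq_of_ae_add_eq {Ω : Type*} [MeasurableSpace Ω] {μ : Measure Ω}
    [IsProbabilityMeasure μ] {W : ℕ → Ω → ℝ × ℝ} {FU FV : ℝ → ℝ} (hFU : Monotone FU)
    (hFV : StrictMono FV) {c : ℝ} (hW : ∀ i, ∀ᵐ ω ∂μ, FU (W i ω).1 + FV (W i ω).2 = c)
    (N : ℕ) :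
    ∫ ω, (paretoCard (fun i : Fin N => W i ω) : ℝ) ∂μ = N := by
  have hall : ∀ᵐ ω ∂μ, (paretoCard (fun i : Fin N => W i ω) : ℝ) = N := by
    filter_upwards [ae_all_iff.2 fun i : Fin N => hW i] with ω hω
    rw [paretoCard_eq_of_forall_isParetoPoint (isParetoPoint_of_forall_add_eq hFU hFV hω)]
  rw [integral_congr_ae hall, integral_const, probReal_univ, one_smul]

theorem frechet_lower_bound_pareto_scaling_general
    {Ω : Type*} [MeasurableSpace Ω] (μ : Measure Ω) [IsProbabilityMeasure μ]
    (W : ℕ → Ω → ℝ × ℝ)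
    (hident : ∀ i, IdentDistrib (W i) (W 0) μ μ)
    (F : ℝ → ℝ → ℝ) (FU FV : ℝ → ℝ)
    (hF : ∀ u v, F u v = (μ {ω | (W 0 ω).1 ≤ u ∧ (W 0 ω).2 ≤ v}).toReal)
    (hFU : ∀ u, FU u = (μ {ω | (W 0 ω).1 ≤ u}).toReal)
    (hFV : ∀ v, FV v = (μ {ω | (W 0 ω).2 ≤ v}).toReal)
    -- the marginal CDFs are invertible (strictly monotone bijections onto (0,1))
    (hFUmono : StrictMono FU) (hFUrange : Set.range FU = Set.Ioo 0 1)
    (hFVmono : StrictMono FV) (hFVrange : Set.range FV = Set.Ioo 0 1)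
    -- the copula of the samples is the Fréchet–Hoeffding lower bound W
    (hC : ∀ u v, F u v = frechetW (FU u) (FV v)) :
    (∀ N : ℕ, 1 ≤ N →
      (Set.Icc (0:ℝ) 1 ×ˢ Set.Icc (0:ℝ) 1) \ copulaRegion frechetW N
        = {p : ℝ × ℝ | 0 ≤ p.1 ∧ 0 ≤ p.2 ∧ p.1 + p.2 < Real.exp (-1 / (N : ℝ))}) ∧
    (∀ N : ℕ, 1 ≤ N →
      (volume (copulaRegion frechetW N)).toReal
        = 1 - (1 / 2) * Real.exp (-2 / (N : ℝ))) ∧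
    ((fun N : ℕ => (volume (copulaRegion frechetW N)).toReal - 1 / 2)
      =O[atTop] (fun N : ℕ => 1 / (N : ℝ))) ∧
    ((fun N : ℕ => ∫ ω, (paretoCard (fun i : Fin N => W i ω) : ℝ) ∂μ)
      =Θ[atTop] (fun N : ℕ => (N : ℝ))) := by
  refine ⟨fun N _ => unitSquare_diff_copulaRegion_frechetW N,
    fun N _ => volume_copulaRegion_frechetW N, volume_copulaRegion_frechetW_sub_half_isBigO, ?_⟩
  have hW0 : ∀ᵐ ω ∂μ, FU (W 0 ω).1 + FV (W 0 ω).2 = 1 :=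
    ae_add_eq_one_of_copula_frechetW (hident 0).aemeasurable_fst
      (fun u v => (hF u v).symm.trans (hC u v))
      (fun u => (hFU u).symm) (fun v => (hFV v).symm) hFUmono hFUrange hFVmono hFVrange
  have hcurve : MeasurableSet {x : ℝ × ℝ | FU x.1 + FV x.2 = 1} :=
    measurableSet_eq_fun ((hFUmono.monotone.measurable.comp measurable_fst).add
      (hFVmono.monotone.measurable.comp measurable_snd)) measurable_const
  have hW : ∀ i, ∀ᵐ ω ∂μ, FU (W i ω).1 + FV (W i ω).2 = 1 :=
    fun i => (hident i).symm.ae_mem_snd hcurve hW0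
  simp_rw [integral_paretoCard_eq_of_ae_add_eq hFUmono.monotone hFVmono hW]
  exact isTheta_refl _ _

/-- For the Fréchet–Hoeffding lower-bound copula `W`, the complement `[0,1]² \ R_N` is
the triangle with vertices `(0,0)`, `(0,e^{-1/N})`, `(e^{-1/N},0)`; hence
`λ(R_N) = 1 - e^{-2/N}/2 = 1/2 + O(1/N)`, and for i.i.d. samples with Lipschitz joint
CDF, invertible marginals, and copula `W`, `E[|Pareto(S)|] = Θ(N)`. -/
theorem frechet_lower_bound_pareto_scaling
    {Ω : Type*} [MeasurableSpace Ω] (μ : Measure Ω) [IsProbabilityMeasure μ]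
    (W : ℕ → Ω → ℝ × ℝ) (hWmeas : ∀ i, Measurable (W i))
    (hindep : iIndepFun W μ)
    (hident : ∀ i, IdentDistrib (W i) (W 0) μ μ)
    (F : ℝ → ℝ → ℝ) (FU FV : ℝ → ℝ)
    (hF : ∀ u v, F u v = (μ {ω | (W 0 ω).1 ≤ u ∧ (W 0 ω).2 ≤ v}).toReal)
    (hFU : ∀ u, FU u = (μ {ω | (W 0 ω).1 ≤ u}).toReal)
    (hFV : ∀ v, FV v = (μ {ω | (W 0 ω).2 ≤ v}).toReal)
    -- the joint CDF is Lipschitz continuous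
    (hLip : ∃ K : NNReal, LipschitzWith K (fun p : ℝ × ℝ => F p.1 p.2))
    -- the marginal CDFs are invertible (strictly monotone bijections onto (0,1))
    (hFUmono : StrictMono FU) (hFUrange : Set.range FU = Set.Ioo 0 1)
    (hFVmono : StrictMono FV) (hFVrange : Set.range FV = Set.Ioo 0 1)
    -- the copula of the samples is the Fréchet–Hoeffding lower bound W
    (hC : ∀ u v, F u v = frechetW (FU u) (FV v)) :
    (∀ N : ℕ, 1 ≤ N →
      (Set.Icc (0:ℝ) 1 ×ˢ Set.Icc (0:ℝ) 1) \ copulaRegion frechetW N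
        = {p : ℝ × ℝ | 0 ≤ p.1 ∧ 0 ≤ p.2 ∧ p.1 + p.2 < Real.exp (-1 / (N : ℝ))}) ∧
    (∀ N : ℕ, 1 ≤ N →
      (volume (copulaRegion frechetW N)).toReal
        = 1 - (1 / 2) * Real.exp (-2 / (N : ℝ))) ∧
    ((fun N : ℕ => (volume (copulaRegion frechetW N)).toReal - 1 / 2)
      =O[atTop] (fun N : ℕ => 1 / (N : ℝ))) ∧
    ((fun N : ℕ => ∫ ω, (paretoCard (fun i : Fin N => W i ω) : ℝ) ∂μ)
      =Θ[atTop] (fun N : ℕ => (N : ℝ))) :=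
  frechet_lower_bound_pareto_scaling_general μ W hident F FU FV hF hFU hFV hFUmono hFUrange hFVmono
    hFVrange hC
end

section
/- Let G be a finite group, let X₁ and X₂ be independent uniformly distributed random elements of G, let Y = X₁ · X₂, let H be a normal subgroup of G, and let f : G → G/H be the quotient map. Then the joint entropy of Z = (f(X₁), f(X₂)) is H(Z) = 2 log₂(|G|/|H|), and the mutual information I(Z; Y) = log₂(|G|/|H|); in particular, the clustering f saturates the feasibility bound: the captured relevant information equals half the entropy of the pair, i.e., I(Z; Y) = H(Z)/2 = log₂(|G|/|H|). -/
open Finset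

/-- Shannon entropy (in bits) of a probability mass function on a finite type
(with the convention `0 · log 0 = 0`, which holds since `Real.logb 2 0 = 0`). -/
noncomputable def shannonEntropy {α : Type*} [Fintype α] (q : α → ℝ) : ℝ :=
  -∑ a, q a * Real.logb 2 (q a)

/-- Pushforward of a PMF `p` on `α` along `f : α → β`: the PMF of `f(X)` for `X ∼ p`. -/
noncomputable def pushforward {α β : Type*} [Fintype α] [DecidableEq β]
    (f : α → β) (p : α → ℝ) : β → ℝ :=
  fun b => ∑ a, if f a = b then p a else 0

/-- Mutual information `I(f(X); g(X)) = H(f(X)) + H(g(X)) - H(f(X), g(X))` for `X ∼ p`. -/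
noncomputable def mutualInfoOf {α β γ : Type*} [Fintype α] [Fintype β] [Fintype γ]
    [DecidableEq β] [DecidableEq γ] (f : α → β) (g : α → γ) (p : α → ℝ) : ℝ :=
  shannonEntropy (pushforward f p) + shannonEntropy (pushforward g p)
    - shannonEntropy (pushforward (fun a => (f a, g a)) p)

lemma fiber_sum {G : Type*} [Group G] [Fintype G]
    (H : Subgroup G) [H.Normal] [Fintype (G ⧸ H)] [DecidableEq (G ⧸ H)]
    (q : G ⧸ H) (c : ℝ) :
    ∑ x : G, (if (QuotientGroup.mk x : G ⧸ H) = q then c else 0)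
      = (Nat.card H : ℝ) * c := by
  classical
  obtain ⟨g, rfl⟩ := QuotientGroup.mk_surjective q
  rw [← Equiv.sum_comp (Equiv.mulLeft g)
    (fun x => if (QuotientGroup.mk x : G ⧸ H) = QuotientGroup.mk g then c else 0)]
  have : ∀ x : G, ((QuotientGroup.mk (Equiv.mulLeft g x) : G ⧸ H) = QuotientGroup.mk g)
      ↔ x ∈ H := by
    intro x
    rw [Equiv.coe_mulLeft, QuotientGroup.mk_mul, mul_eq_left,
      QuotientGroup.eq_one_iff]
  rw [Finset.sum_congr rfl (fun x _ => if_congr (this x) rfl rfl)]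
  rw [Finset.sum_ite, Finset.sum_const, Finset.sum_const_zero, add_zero, nsmul_eq_mul]
  congr 2
  rw [Nat.card_eq_fintype_card, Fintype.card_subtype]

lemma entropy_const_inv {α : Type*} [Fintype α] (N : ℝ)
    (hN : (Fintype.card α : ℝ) = N) (h0 : 0 < N) :
    shannonEntropy (fun _ : α => N⁻¹) = Real.logb 2 N := by
  unfold shannonEntropy
  rw [Finset.sum_const, Finset.card_univ, nsmul_eq_mul, hN, Real.logb_inv]
  field_simp

/-- Let `X₁, X₂` be independent uniform random elements of a finite group `G` (so the
pair is uniform on `G²`), `Y = X₁ · X₂`, `H ⊴ G` a normal subgroup, and `f : G → G/H`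
the quotient map. Then `Z = (f(X₁), f(X₂))` satisfies `H(Z) = 2 log₂(|G|/|H|)` and
`I(Z; Y) = log₂(|G|/|H|) = H(Z)/2`, saturating the feasibility bound. -/
theorem group_quotient_clustering_saturates
    {G : Type*} [Group G] [Fintype G] [DecidableEq G]
    (H : Subgroup G) [H.Normal] [Fintype (G ⧸ H)] [DecidableEq (G ⧸ H)]
    -- the pair (X₁, X₂) is uniformly distributed on G × G
    (p : G × G → ℝ) (hp : ∀ x, p x = ((Fintype.card G : ℝ) ^ 2)⁻¹)
    -- Z = (f(X₁), f(X₂)) where f is the quotient map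
    (Z : G × G → (G ⧸ H) × (G ⧸ H))
    (hZ : ∀ x, Z x = (QuotientGroup.mk x.1, QuotientGroup.mk x.2))
    -- Y = X₁ · X₂
    (Y : G × G → G) (hY : ∀ x, Y x = x.1 * x.2) :
    shannonEntropy (pushforward Z p)
        = 2 * Real.logb 2 ((Nat.card G : ℝ) / (Nat.card H : ℝ)) ∧
    mutualInfoOf Z Y p
        = Real.logb 2 ((Nat.card G : ℝ) / (Nat.card H : ℝ)) ∧
    mutualInfoOf Z Y p = shannonEntropy (pushforward Z p) / 2 := by
  classical
  set k : ℝ := (Nat.card H : ℝ) with hkdef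
  set m : ℝ := (Fintype.card (G ⧸ H) : ℝ) with hmdef
  set n : ℝ := (Fintype.card G : ℝ) with hndef
  have hk0 : 0 < k := by
    rw [hkdef]; exact_mod_cast Nat.card_pos
  have hm0 : 0 < m := by
    rw [hmdef]; exact_mod_cast Fintype.card_pos
  have hnmk : n = m * k := by
    rw [hndef, hmdef, hkdef, ← Nat.card_eq_fintype_card, ← Nat.card_eq_fintype_card]
    exact_mod_cast Subgroup.card_eq_card_quotient_mul_card_subgroup H
  have hn0 : 0 < n := by rw [hnmk]; positivity
  -- pushforward of Z is uniform on (G⧸H)²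
  have hZp : ∀ z, pushforward Z p z = (m ^ 2)⁻¹ := by
    rintro ⟨a, b⟩
    unfold pushforward
    simp only [hZ, hp, Prod.mk.injEq]
    rw [Fintype.sum_prod_type]
    have h1 : ∀ x₁ : G,
        (∑ x₂ : G, if ((QuotientGroup.mk x₁ : G ⧸ H) = a ∧
            (QuotientGroup.mk x₂ : G ⧸ H) = b) then (n ^ 2)⁻¹ else 0)
        = if (QuotientGroup.mk x₁ : G ⧸ H) = a then k * (n ^ 2)⁻¹ else 0 := by
      intro x₁
      by_cases h : (QuotientGroup.mk x₁ : G ⧸ H) = a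
      · simp only [h, true_and, if_pos]
        exact fiber_sum H b _
      · simp [h]
    rw [Finset.sum_congr rfl (fun x _ => h1 x), fiber_sum H a _]
    rw [hnmk]
    field_simp
    rw [← hkdef]
  -- pushforward of Y is uniform on G
  have hYp : ∀ g, pushforward Y p g = n⁻¹ := by
    intro g
    unfold pushforward
    simp only [hY, hp]
    rw [Fintype.sum_prod_type]
    have h1 : ∀ x₁ : G, (∑ x₂ : G, if x₁ * x₂ = g then (n ^ 2)⁻¹ else 0)
        = (n ^ 2)⁻¹ := by
      intro x₁
      have key : ∀ x₂ : G, (x₁ * x₂ = g) ↔ (x₂ = x₁⁻¹ * g) := by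
        intro x₂; rw [eq_inv_mul_iff_mul_eq]
      rw [Finset.sum_congr rfl (fun x _ => if_congr (key x) rfl rfl),
        Finset.sum_ite_eq' Finset.univ (x₁⁻¹ * g)]
      simp
    rw [Finset.sum_congr rfl (fun x _ => h1 x), Finset.sum_const,
      Finset.card_univ, nsmul_eq_mul, ← hndef, sq, mul_inv, ← mul_assoc,
      mul_inv_cancel₀ (ne_of_gt hn0), one_mul]
  -- pushforward of (Z, Y)
  have hWp : ∀ w : ((G ⧸ H) × (G ⧸ H)) × G,
      pushforward (fun x => (Z x, Y x)) p w
        = if (QuotientGroup.mk w.2 : G ⧸ H) = w.1.1 * w.1.2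
          then (m ^ 2 * k)⁻¹ else 0 := by
    rintro ⟨⟨a, b⟩, g⟩
    unfold pushforward
    simp only [hZ, hY, hp, Prod.mk.injEq]
    rw [Fintype.sum_prod_type]
    have h1 : ∀ x₁ : G,
        (∑ x₂ : G, if (((QuotientGroup.mk x₁ : G ⧸ H) = a ∧
            (QuotientGroup.mk x₂ : G ⧸ H) = b) ∧ x₁ * x₂ = g)
          then (n ^ 2)⁻¹ else 0)
        = if (QuotientGroup.mk g : G ⧸ H) = a * b then
            (if (QuotientGroup.mk x₁ : G ⧸ H) = a then (n ^ 2)⁻¹ else 0)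
          else 0 := by
      intro x₁
      have key : ∀ x₂ : G,
          (((QuotientGroup.mk x₁ : G ⧸ H) = a ∧
            (QuotientGroup.mk x₂ : G ⧸ H) = b) ∧ x₁ * x₂ = g)
          ↔ (x₂ = x₁⁻¹ * g ∧ ((QuotientGroup.mk g : G ⧸ H) = a * b ∧
              (QuotientGroup.mk x₁ : G ⧸ H) = a)) := by
        intro x₂
        constructor
        · rintro ⟨⟨ha, hb⟩, hg⟩
          subst hg; subst ha; subst hb
          refine ⟨by group, ?_, rfl⟩
          rw [QuotientGroup.mk_mul]
        · rintro ⟨hx, hg, ha⟩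
          subst hx; subst ha
          refine ⟨⟨rfl, ?_⟩, by group⟩
          rw [QuotientGroup.mk_mul, QuotientGroup.mk_inv, hg]
          group
      rw [Finset.sum_congr rfl (fun x _ => if_congr (key x) rfl rfl)]
      simp only [ite_and]
      rw [Finset.sum_ite_eq' Finset.univ (x₁⁻¹ * g)]
      simp
    rw [Finset.sum_congr rfl (fun x _ => h1 x)]
    by_cases hg : (QuotientGroup.mk g : G ⧸ H) = a * b
    · simp only [hg, if_pos]
      rw [fiber_sum H a _, hnmk]
      field_simp
      rw [← hkdef]
    · simp [hg]
  -- entropies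
  have hEZ : shannonEntropy (pushforward Z p) = 2 * Real.logb 2 m := by
    have : pushforward Z p = fun _ => (m ^ 2)⁻¹ := funext hZp
    rw [this, entropy_const_inv (m ^ 2) ?_ (by positivity), Real.logb_pow]
    · push_cast; ring
    · rw [Fintype.card_prod, Nat.cast_mul, ← hmdef, sq]
  have hEY : shannonEntropy (pushforward Y p) = Real.logb 2 n := by
    have : pushforward Y p = fun _ => n⁻¹ := funext hYp
    rw [this, entropy_const_inv n rfl hn0]
  have hEW : shannonEntropy (pushforward (fun x => (Z x, Y x)) p)
      = Real.logb 2 (m ^ 2 * k) := by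
    unfold shannonEntropy
    rw [Finset.sum_congr rfl (fun w _ => by rw [hWp w])]
    have step : ∀ w : ((G ⧸ H) × (G ⧸ H)) × G,
        (if (QuotientGroup.mk w.2 : G ⧸ H) = w.1.1 * w.1.2
          then (m ^ 2 * k)⁻¹ else 0) *
        Real.logb 2 (if (QuotientGroup.mk w.2 : G ⧸ H) = w.1.1 * w.1.2
          then (m ^ 2 * k)⁻¹ else 0)
        = if (QuotientGroup.mk w.2 : G ⧸ H) = w.1.1 * w.1.2
          then (m ^ 2 * k)⁻¹ * Real.logb 2 (m ^ 2 * k)⁻¹ else 0 := by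
      intro w; split <;> simp
    rw [Finset.sum_congr rfl (fun w _ => step w), Fintype.sum_prod_type]
    have inner : ∀ ab : (G ⧸ H) × (G ⧸ H),
        (∑ g : G, if (QuotientGroup.mk g : G ⧸ H) = ab.1 * ab.2
          then (m ^ 2 * k)⁻¹ * Real.logb 2 (m ^ 2 * k)⁻¹ else 0)
        = k * ((m ^ 2 * k)⁻¹ * Real.logb 2 (m ^ 2 * k)⁻¹) := by
      intro ab; exact fiber_sum H (ab.1 * ab.2) _
    rw [Finset.sum_congr rfl (fun ab _ => inner ab), Finset.sum_const,
      Finset.card_univ, nsmul_eq_mul, Fintype.card_prod]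
    push_cast
    rw [← hmdef, Real.logb_inv]
    have hmk : 0 < m ^ 2 * k := by positivity
    field_simp
  -- the quotient of cards equals m
  have hq : (Nat.card G : ℝ) / (Nat.card H : ℝ) = m := by
    rw [Nat.card_eq_fintype_card, ← hndef, ← hkdef, hnmk]
    field_simp
  have hlogn : Real.logb 2 n = Real.logb 2 m + Real.logb 2 k := by
    rw [hnmk, Real.logb_mul (ne_of_gt hm0) (ne_of_gt hk0)]
  have hlogmk : Real.logb 2 (m ^ 2 * k) = 2 * Real.logb 2 m + Real.logb 2 k := by
    rw [Real.logb_mul (by positivity) (ne_of_gt hk0), Real.logb_pow]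
    push_cast; ring
  have hMI : mutualInfoOf Z Y p = Real.logb 2 m := by
    unfold mutualInfoOf
    rw [hEZ, hEY, hEW, hlogn, hlogmk]
    ring
  refine ⟨by rw [hq, hEZ], by rw [hq, hMI], by rw [hMI, hEZ]; ring⟩
end
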